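/- arXiv:0806.0176 — 2 statements merged into one kernel-verified Lean document; each statement's English description precedes it below -/
import Mathlib

section
/- In the ring C, for finite subsets I, J of ℤ, the ideal intersection satisfies Cx_I ∩ Cx_J = Cx_{I∪J}. -/
open scoped symmDiff

noncomputable section

/-- The ring `C = k[x_n : n ∈ ℤ] / (x_n² + n = x_m² + m)`. -/
abbrev WeylC (k : Type) [Field k] : Type :=
  MvPolynomial ℤ k ⧸ Ideal.span { p : MvPolynomial ℤ k |
    ∃ m n : ℤ, p = MvPolynomial.X n ^ 2 + (n : MvPolynomial ℤ k)
      - MvPolynomial.X m ^ 2 - (m : MvPolynomial ℤ k) }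

variable (k : Type) [Field k]

/-- The generator `x_n` of `C`. -/
def xC (n : ℤ) : WeylC k := Ideal.Quotient.mk _ (MvPolynomial.X n)

/-- `x_I := ∏_{i ∈ I} x_i` for a finite subset `I ⊆ ℤ` (with `x_∅ = 1`). -/
def xS (I : Finset ℤ) : WeylC k := ∏ i ∈ I, xC k i

/-- The identity component `C_∅ = k[x_0²]`. -/
def Cphi : Subalgebra k (WeylC k) := Algebra.adjoin k {xC k 0 ^ 2}

/-- The homogeneous component `C_I = C_∅ · x_I` of the `ℤ_fin`-grading on `C`. -/
def Cgrade (I : Finset ℤ) : Submodule k (WeylC k) :=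
  (Cphi k).toSubmodule.map (LinearMap.mulRight k (xS k I))

lemma xC_sq_sub_xC_sq (i j : ℤ) : xC k i ^ 2 - xC k j ^ 2 = ((j - i : ℤ) : WeylC k) := by
  have hrel : Ideal.Quotient.mk _ (MvPolynomial.X i ^ 2 + (i : MvPolynomial ℤ k)
      - MvPolynomial.X j ^ 2 - (j : MvPolynomial ℤ k)) = (0 : WeylC k) :=
    Ideal.Quotient.eq_zero_iff_mem.2 (Ideal.subset_span ⟨j, i, rfl⟩)
  simp only [map_sub, map_add, map_pow, map_intCast] at hrel
  rw [xC, xC]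
  push_cast
  linear_combination hrel

-- `x_i² - x_j² = j - i` is a unit of `C` as soon as `i ≠ j`.
lemma isCoprime_xC [CharZero k] {i j : ℤ} (hij : i ≠ j) : IsCoprime (xC k i) (xC k j) := by
  have hunit : IsUnit ((j - i : ℤ) : WeylC k) := by
    rw [← map_intCast (algebraMap k (WeylC k))]
    exact (Ne.isUnit (Int.cast_ne_zero.2 (sub_ne_zero.2 hij.symm))).map _
  rw [← xC_sq_sub_xC_sq] at hunit
  obtain ⟨u, hu⟩ := hunit.exists_right_inv
  exact ⟨xC k i * u, -(xC k j * u), by linear_combination hu⟩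

variable [CharZero k]

/-- In `C`, the intersection of the principal (graded) ideals
satisfies `Cx_I ∩ Cx_J = Cx_{I∪J}`. -/
theorem ideal_inf_eq (I J : Finset ℤ) :
    Ideal.span {xS k I} ⊓ Ideal.span {xS k J} = Ideal.span {xS k (I ∪ J)} := by
  apply le_antisymm
  · intro c hc
    rw [Ideal.mem_inf, Ideal.mem_span_singleton, Ideal.mem_span_singleton] at hc
    rw [Ideal.mem_span_singleton]
    refine Finset.prod_dvd_of_coprime (fun i _ j _ hij => isCoprime_xC k hij) fun i hi => ?_
    rcases Finset.mem_union.1 hi with hiI | hiJ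
    · exact (Finset.dvd_prod_of_mem _ hiI).trans hc.1
    · exact (Finset.dvd_prod_of_mem _ hiJ).trans hc.2
  · rw [le_inf_iff, Ideal.span_singleton_le_span_singleton, Ideal.span_singleton_le_span_singleton]
    exact ⟨Finset.prod_dvd_prod_of_subset _ _ _ Finset.subset_union_left,
      Finset.prod_dvd_prod_of_subset _ _ _ Finset.subset_union_right⟩
end
end

section
/- The ring C = k[x_n : n ∈ ℤ]/(x_n² + n = x_m² + m) is not Noetherian: the chain of ideals 𝔞_N generated by {x_d + √(−d) : d ≤ N} (over an algebraically closed field k) is strictly increasing. -/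
open scoped symmDiff

noncomputable section

variable (k : Type) [Field k]

variable [CharZero k]

/-!
To separate `x_{N+1} + √(-(N+1))` from `𝔞_N`, map `C` to `K[t] / (t² + N + 1)` by sending
`x_d ↦ -√(-d)` for `d ≠ N + 1` and `x_{N+1} ↦ t`. This respects the relations of `C`,
kills `𝔞_N`, and sends `x_{N+1} + √(-(N+1))` to `t + √(-(N+1)) ≠ 0`. Adjoining a formal root
avoids the case `N + 1 = 0`, where `√0 = 0` is the only square root of `0` in `K` itself.
A strictly increasing chain of ideals indexed by `ℕ` then rules out the Noetherian property.
-/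

open Polynomial

theorem AdjoinRoot.root_ne_of {K : Type*} [Field K] {f : K[X]} (hf : 1 < f.natDegree) (a : K) :
    AdjoinRoot.root f ≠ AdjoinRoot.of f a := by
  intro h
  have hdvd : f ∣ X - C a := by
    rw [← AdjoinRoot.mk_eq_zero, map_sub, AdjoinRoot.mk_X, AdjoinRoot.mk_C, h, sub_self]
  have := natDegree_le_of_dvd hdvd (X_sub_C_ne_zero a)
  rw [natDegree_X_sub_C] at this
  omega

theorem AdjoinRoot.root_sq_add_C {R : Type*} [CommRing R] (c : R) :
    AdjoinRoot.root (X ^ 2 + C c) ^ 2 = -AdjoinRoot.of (X ^ 2 + C c) c := by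
  have hroot := AdjoinRoot.eval₂_root (X ^ 2 + C c)
  rw [eval₂_add, eval₂_X_pow, eval₂_C] at hroot
  exact eq_neg_of_add_eq_zero_left hroot

namespace WeylC

variable {K : Type} [Field K]

def lift {A : Type} [CommRing A] [Algebra K A] (e : ℤ → A)
    (he : ∀ n : ℤ, e n ^ 2 = -(n : A)) : WeylC K →ₐ[K] A :=
  Ideal.Quotient.liftₐ _ (MvPolynomial.aeval e) fun p hp => by
    refine (Ideal.span_le (I := RingHom.ker (MvPolynomial.aeval e))).mpr ?_ hp
    rintro _ ⟨m, n, rfl⟩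
    simp only [SetLike.mem_coe, RingHom.mem_ker, map_sub, map_add, map_pow,
      MvPolynomial.aeval_X, map_intCast, he]
    ring

@[simp]
theorem lift_xC {A : Type} [CommRing A] [Algebra K A] (e : ℤ → A)
    (he : ∀ n : ℤ, e n ^ 2 = -(n : A)) (n : ℤ) : lift e he (xC K n) = e n :=
  MvPolynomial.aeval_X e n

/-- The ideal `𝔞_N`. -/
def chainIdeal (s : ℤ → K) (N : ℤ) : Ideal (WeylC K) :=
  Ideal.span {c : WeylC K | ∃ d : ℤ, d ≤ N ∧ c = xC K d + algebraMap K (WeylC K) (s d)}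

theorem chainIdeal_mono (s : ℤ → K) : Monotone (chainIdeal s) := by
  intro M N hMN
  refine Ideal.span_mono ?_
  rintro _ ⟨d, hd, rfl⟩
  exact ⟨d, hd.trans hMN, rfl⟩

theorem chainIdeal_le_ker {A : Type} [CommRing A] [Algebra K A] {s : ℤ → K} {N : ℤ}
    {f : WeylC K →ₐ[K] A} (hf : ∀ d ≤ N, f (xC K d) = -algebraMap K A (s d)) :
    chainIdeal s N ≤ RingHom.ker f := by
  refine Ideal.span_le.mpr ?_
  rintro _ ⟨d, hd, rfl⟩
  simp [hf d hd]

theorem chainIdeal_lt_succ {s : ℤ → K} (hs : ∀ d : ℤ, s d ^ 2 = (-d : K)) (N : ℤ) :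
    chainIdeal s N < chainIdeal s (N + 1) := by
  set f : K[X] := X ^ 2 + C ((N + 1 : ℤ) : K)
  have hf : f.natDegree = 2 := by unfold f; compute_degree!
  let e : ℤ → AdjoinRoot f :=
    Function.update (fun d => -AdjoinRoot.of f (s d)) (N + 1) (AdjoinRoot.root f)
  have he : ∀ n : ℤ, e n ^ 2 = -(n : AdjoinRoot f) := by
    intro n
    by_cases hn : n = N + 1
    · subst hn
      have hroot : AdjoinRoot.root f ^ 2 = -AdjoinRoot.of f ((N + 1 : ℤ) : K) :=
        AdjoinRoot.root_sq_add_C _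
      rw [map_intCast] at hroot
      simpa only [e, Function.update_self] using hroot
    · simp [e, hn, ← map_pow, hs]
  have hker : chainIdeal s N ≤ RingHom.ker (lift e he) :=
    chainIdeal_le_ker fun d hd => by simp [e, Function.update_of_ne (by omega : d ≠ N + 1)]
  refine SetLike.lt_iff_le_and_exists.mpr ⟨chainIdeal_mono s (by omega), _,
    Ideal.subset_span ⟨N + 1, le_rfl, rfl⟩, fun hmem => ?_⟩
  have hzero := hker hmem
  simp only [RingHom.mem_ker, map_add, lift_xC, AlgHom.commutes, e, Function.update_self,
    ← eq_neg_iff_add_eq_zero, AdjoinRoot.algebraMap_eq, ← map_neg] at hzero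
  exact AdjoinRoot.root_ne_of (by omega) _ hzero

end WeylC

theorem weylC_not_noetherian (s : ℤ → k) (hs : ∀ d : ℤ, s d ^ 2 = (-d : k)) :
    (∀ N : ℤ,
      Ideal.span {c : WeylC k | ∃ d : ℤ, d ≤ N ∧ c = xC k d + algebraMap k (WeylC k) (s d)} <
      Ideal.span {c : WeylC k | ∃ d : ℤ, d ≤ N + 1 ∧ c = xC k d + algebraMap k (WeylC k) (s d)}) ∧
    ¬ IsNoetherianRing (WeylC k) := by
  refine ⟨WeylC.chainIdeal_lt_succ hs, fun _ => ?_⟩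
  refine not_strictMono_of_wellFoundedGT (fun n : ℕ => WeylC.chainIdeal s n) ?_
  exact strictMono_nat_of_lt_succ fun n => by exact_mod_cast WeylC.chainIdeal_lt_succ hs n
end
end
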